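/- Let X be a Fréchet space over 𝕂 ∈ {ℝ, ℂ}, let A be a multivalued linear operator in X (a linear subspace of X × X), let λ ∈ 𝕂 with |λ| ≥ 1, and suppose there exists a non-zero continuous linear functional x* on X such that ⟨x*, y⟩ = λ⟨x*, x⟩ for every pair (x, y) ∈ A (i.e., λ is an eigenvalue of the adjoint A*). Then A cannot have a dense set of Li-Yorke near to zero vectors: the set {x ∈ D_∞(A) : x is Li-Yorke near to zero for A} is not dense in X. -/

import Mathlib

/-!
Iterating the eigenvalue relation gives `x*(xₙ) = λⁿ x*(x)` whenever `xₙ ∈ Aⁿ x`. Since `|λ| ≥ 1`,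
the values `x*(xₙ)` stay away from `0` unless `x*(x) = 0`, so every Li-Yorke near to zero vector
lies in the closed hyperplane `ker x*`, which is not dense.
-/

/-- Composition of binary relations on `X` (first `R`, then `S`). -/
def relComp {X : Type*} (R S : Set (X × X)) : Set (X × X) :=
  {p | ∃ y, (p.1, y) ∈ R ∧ (y, p.2) ∈ S}

/-- Powers of a binary relation on `X`: `relPow R 0` is the diagonal and
`relPow R (n+1) = relPow R n ∘ R`; in particular `relPow R 1 = R`. -/
def relPow {X : Type*} (R : Set (X × X)) : ℕ → Set (X × X)
  | 0 => {p | p.1 = p.2}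
  | n + 1 => relComp (relPow R n) R

/-- `x` is Li-Yorke near to zero for the MLO `A`: `x ∈ D_∞(A)` and for each `n ≥ 1` there is
`x_n ∈ A^n x` such that the sequence `(x_n)` has a subsequence converging to `0`. -/
def LiYorkeNearZero {𝕜 : Type*} [RCLike 𝕜] {X : Type*}
    [AddCommGroup X] [Module 𝕜 X] [TopologicalSpace X]
    (A : Submodule 𝕜 (X × X)) (x : X) : Prop :=
  (∀ n : ℕ, ∃ y : X, (x, y) ∈ relPow (A : Set (X × X)) (n + 1)) ∧
  ∃ xs : ℕ → X, (∀ n : ℕ, (x, xs n) ∈ relPow (A : Set (X × X)) (n + 1)) ∧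
    ∃ φ : ℕ → ℕ, StrictMono φ ∧
      Filter.Tendsto (fun j : ℕ => xs (φ j)) Filter.atTop (nhds 0)

theorem apply_snd_eq_pow_mul_of_mem_relPow {X M : Type*} [CommMonoid M] {R : Set (X × X)}
    {f : X → M} {c : M} (hR : ∀ p ∈ R, f p.2 = c * f p.1) :
    ∀ n, ∀ p ∈ relPow R n, f p.2 = c ^ n * f p.1
  | 0, p, hp => by simp [show p.1 = p.2 from hp]
  | n + 1, (x, z), ⟨y, hxy, hyz⟩ => by
    rw [hR (y, z) hyz, apply_snd_eq_pow_mul_of_mem_relPow hR n (x, y) hxy, pow_succ', mul_assoc]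

theorem LiYorkeNearZero.apply_eq_zero {𝕜 : Type*} [RCLike 𝕜] {X : Type*} [AddCommGroup X]
    [Module 𝕜 X] [TopologicalSpace X] {A : Submodule 𝕜 (X × X)} {lam : 𝕜} (hlam : 1 ≤ ‖lam‖)
    {f : X →L[𝕜] 𝕜} (hf : ∀ p ∈ A, f p.2 = lam * f p.1) {x : X} (hx : LiYorkeNearZero A x) :
    f x = 0 := by
  obtain ⟨-, xs, hxs, φ, -, hlim⟩ := hx
  have hle : ∀ j, ‖f x‖ ≤ ‖f (xs (φ j))‖ := fun j => by
    rw [apply_snd_eq_pow_mul_of_mem_relPow hf _ _ (hxs (φ j)), norm_mul, norm_pow]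
    exact le_mul_of_one_le_left (norm_nonneg _) (one_le_pow₀ hlam)
  have hf_lim : Filter.Tendsto (fun j => f (xs (φ j))) Filter.atTop (nhds 0) := by
    simpa [Function.comp_def] using (f.continuous.tendsto 0).comp hlim
  exact norm_le_zero_iff.mp (ge_of_tendsto' (by simpa using hf_lim.norm) hle)

theorem no_dense_liYorke_near_zero_general {𝕜 : Type*} [RCLike 𝕜] {X : Type*}
    [AddCommGroup X] [Module 𝕜 X] [MetricSpace X]
    (A : Submodule 𝕜 (X × X)) (lam : 𝕜) (hlam : 1 ≤ ‖lam‖)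
    (xstar : X →L[𝕜] 𝕜) (hxstar : xstar ≠ 0)
    (h : ∀ p : X × X, p ∈ A → xstar p.2 = lam * xstar p.1) :
    ¬ Dense {x : X | LiYorkeNearZero A x} := by
  intro hdense
  have hvanish : Set.EqOn xstar 0 {x : X | LiYorkeNearZero A x} :=
    fun _ hx => hx.apply_eq_zero hlam h
  exact hxstar <|
    DFunLike.coe_injective (Continuous.ext_on hdense xstar.continuous continuous_zero hvanish)

/-- let `X` be a Fréchet space over `𝕜 ∈ {ℝ, ℂ}`, `A` a multivalued linear
operator in `X`, `λ ∈ 𝕜` with `|λ| ≥ 1`, and suppose there is a non-zero continuous linear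
functional `x*` with `⟨x*, y⟩ = λ ⟨x*, x⟩` for all `(x, y) ∈ A` (i.e. `λ ∈ σ_p(A*)`). Then the
set of Li-Yorke near to zero vectors of `A` is not dense in `X`. -/
theorem no_dense_liYorke_near_zero {𝕜 : Type*} [RCLike 𝕜] {X : Type*}
    [AddCommGroup X] [Module 𝕜 X] [MetricSpace X] [IsTopologicalAddGroup X]
    [ContinuousSMul 𝕜 X] [CompleteSpace X]
    [Module ℝ X] [IsScalarTower ℝ 𝕜 X] [LocallyConvexSpace ℝ X]
    (A : Submodule 𝕜 (X × X)) (lam : 𝕜) (hlam : 1 ≤ ‖lam‖)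
    (xstar : X →L[𝕜] 𝕜) (hxstar : xstar ≠ 0)
    (h : ∀ p : X × X, p ∈ A → xstar p.2 = lam * xstar p.1) :
    ¬ Dense {x : X | LiYorkeNearZero A x} :=
  no_dense_liYorke_near_zero_general A lam hlam xstar hxstar h
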